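/- Let (M, d) be a finite metric space, k ≥ 1, let (s_1, t_1), …, (s_m, t_m) be Uber demands, and let A_0 be an initial configuration. Then for every real α ≥ 0, α · OPT_k + 2 ∑_{i=1}^m d(s_i, t_i) ≤ (α + 2) · OPT_U. Consequently, any solution of the Uber instance whose cost C satisfies C ≤ α · OPT_k + 2 ∑_i d(s_i, t_i) satisfies C ≤ (α + 2) · OPT_U. -/
import Mathlib


open Finset

/-- The matching distance between two configurations of `k` servers. -/
noncomputable def matchDist {M : Type*} [MetricSpace M] {k : ℕ} (A B : Fin k → M) : ℝ :=
  ⨅ σ : Equiv.Perm (Fin k), ∑ j, dist (A j) (B (σ j))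

/-- The cost of serving the Uber demand `(s, t)` while moving from configuration
`A` to configuration `B`: the minimum over permutations `σ` and server indices
`j` of `∑_{l ≠ j} d(A l, B (σ l)) + d(A j, s) + d(s, t) + d(t, B (σ j))`. -/
noncomputable def uberServe {M : Type*} [MetricSpace M] {k : ℕ}
    (A B : Fin k → M) (s t : M) : ℝ :=
  ⨅ σ : Equiv.Perm (Fin k), ⨅ j : Fin k,
    ((∑ l ∈ univ.erase j, dist (A l) (B (σ l))) +
      dist (A j) s + dist s t + dist t (B (σ j)))

/-- The optimal offline Uber cost for demands `(s_i, t_i)` starting from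
initial configuration `A0`. -/
noncomputable def uberOPT {M : Type*} [MetricSpace M] {k m : ℕ}
    (src dst : Fin m → M) (A0 : Fin k → M) : ℝ :=
  sInf {c | ∃ A : Fin (m + 1) → Fin k → M, A 0 = A0 ∧
    c = ∑ i : Fin m, uberServe (A i.castSucc) (A i.succ) (src i) (dst i)}

/-- The optimal offline `k`-server cost for the source requests `s_1, …, s_m`
starting from initial configuration `A0`. -/
noncomputable def kServerOPT {M : Type*} [MetricSpace M] {k m : ℕ}
    (src : Fin m → M) (A0 : Fin k → M) : ℝ :=
  sInf {c | ∃ A : Fin (m + 1) → Fin k → M, A 0 = A0 ∧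
    (∀ i : Fin m, ∃ j, src i = A i.succ j) ∧
    c = ∑ i : Fin m, matchDist (A i.castSucc) (A i.succ)}


section Aux
variable {M : Type*} [MetricSpace M] {k : ℕ}

lemma matchDist_le (A B : Fin k → M) (σ : Equiv.Perm (Fin k)) :
    matchDist A B ≤ ∑ j, dist (A j) (B (σ j)) :=
  ciInf_le (Finite.bddBelow_range _) σ

lemma matchDist_nonneg (A B : Fin k → M) : 0 ≤ matchDist A B :=
  le_ciInf fun _ => Finset.sum_nonneg fun _ _ => dist_nonneg

lemma matchDist_self (A : Fin k → M) : matchDist A A = 0 :=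
  le_antisymm (by simpa using matchDist_le A A (Equiv.refl _)) (matchDist_nonneg A A)

lemma matchDist_exists (A B : Fin k → M) :
    ∃ σ : Equiv.Perm (Fin k), matchDist A B = ∑ j, dist (A j) (B (σ j)) := by
  obtain ⟨σ, hσ⟩ := Finite.exists_min fun σ : Equiv.Perm (Fin k) => ∑ j, dist (A j) (B (σ j))
  exact ⟨σ, le_antisymm (matchDist_le A B σ) (le_ciInf hσ)⟩

lemma matchDist_triangle (A B C : Fin k → M) :
    matchDist A C ≤ matchDist A B + matchDist B C := by
  obtain ⟨σ1, h1⟩ := matchDist_exists A B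
  obtain ⟨σ2, h2⟩ := matchDist_exists B C
  calc matchDist A C ≤ ∑ j, dist (A j) (C ((σ1.trans σ2) j)) := matchDist_le A C _
  _ ≤ ∑ j, (dist (A j) (B (σ1 j)) + dist (B (σ1 j)) (C (σ2 (σ1 j)))) :=
      Finset.sum_le_sum fun j _ => dist_triangle _ _ _
  _ = matchDist A B + matchDist B C := by
      rw [Finset.sum_add_distrib, h1, h2]
      congr 1
      exact Equiv.sum_comp σ1 fun j => dist (B j) (C (σ2 j))

lemma matchDist_update (A : Fin k → M) (j : Fin k) (s : M) :
    matchDist A (Function.update A j s) ≤ dist (A j) s := by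
  refine le_trans (matchDist_le A _ (Equiv.refl _)) ?_
  simp only [Equiv.refl_apply]
  rw [← Finset.sum_erase_add _ _ (Finset.mem_univ j), Function.update_self]
  have h : ∑ l ∈ univ.erase j, dist (A l) (Function.update A j s l) = 0 :=
    Finset.sum_eq_zero fun l hl => by
      rw [Function.update_of_ne (Finset.ne_of_mem_erase hl), dist_self]
  rw [h, zero_add]

lemma uberServe_le (A B : Fin k → M) (s t : M) (σ : Equiv.Perm (Fin k)) (j : Fin k) :
    uberServe A B s t ≤ (∑ l ∈ univ.erase j, dist (A l) (B (σ l))) +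
      dist (A j) s + dist s t + dist t (B (σ j)) :=
  le_trans (ciInf_le (Finite.bddBelow_range _) σ) (ciInf_le (Finite.bddBelow_range _) j)

lemma uberServe_exists [Nonempty (Fin k)] (A B : Fin k → M) (s t : M) :
    ∃ (σ : Equiv.Perm (Fin k)) (j : Fin k), uberServe A B s t =
      (∑ l ∈ univ.erase j, dist (A l) (B (σ l))) +
      dist (A j) s + dist s t + dist t (B (σ j)) := by
  obtain ⟨⟨σ, j⟩, h⟩ := Finite.exists_min fun p : Equiv.Perm (Fin k) × Fin k =>
    (∑ l ∈ univ.erase p.2, dist (A l) (B (p.1 l))) +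
      dist (A p.2) s + dist s t + dist t (B (p.1 p.2))
  refine ⟨σ, j, le_antisymm (uberServe_le A B s t σ j) ?_⟩
  exact le_ciInf fun σ' => le_ciInf fun j' => h (σ', j')

lemma dist_le_uberServe [Nonempty (Fin k)] (A B : Fin k → M) (s t : M) :
    dist s t ≤ uberServe A B s t := by
  refine le_ciInf fun σ => le_ciInf fun j => ?_
  have h1 : (0:ℝ) ≤ ∑ l ∈ univ.erase j, dist (A l) (B (σ l)) :=
    Finset.sum_nonneg fun _ _ => dist_nonneg
  have h2 := dist_nonneg (x := A j) (y := s)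
  have h3 := dist_nonneg (x := t) (y := B (σ j))
  linarith

lemma update_cost [Nonempty (Fin k)] (A B : Fin k → M) (s t : M)
    (σ : Equiv.Perm (Fin k)) (j : Fin k)
    (hmin : uberServe A B s t = (∑ l ∈ univ.erase j, dist (A l) (B (σ l))) +
      dist (A j) s + dist s t + dist t (B (σ j))) :
    dist (A j) s + matchDist (Function.update A j s) B ≤ uberServe A B s t := by
  have h1 : matchDist (Function.update A j s) B
      ≤ ∑ l, dist (Function.update A j s l) (B (σ l)) := matchDist_le _ _ σ
  have h2 : ∑ l, dist (Function.update A j s l) (B (σ l))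
      = (∑ l ∈ univ.erase j, dist (A l) (B (σ l))) + dist s (B (σ j)) := by
    rw [← Finset.sum_erase_add _ _ (Finset.mem_univ j), Function.update_self]
    congr 1
    exact Finset.sum_congr rfl fun l hl => by
      rw [Function.update_of_ne (Finset.ne_of_mem_erase hl)]
  have h3 : dist s (B (σ j)) ≤ dist s t + dist t (B (σ j)) := dist_triangle _ _ _
  rw [hmin]; linarith

lemma key_lemma [Nonempty (Fin k)]
    (A' B' : ℕ → Fin k → M) (s' t' : ℕ → M) (m : ℕ)
    (h0 : B' 0 = A' 0)
    (htri : ∀ n < m, matchDist (A' n) (B' (n+1)) ≤ uberServe (A' n) (A' (n+1)) (s' n) (t' n) -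
      matchDist (B' (n+1)) (A' (n+1)))
    : ∀ n ≤ m, ∑ i ∈ Finset.range n, matchDist (B' i) (B' (i+1)) + matchDist (B' n) (A' n)
      ≤ ∑ i ∈ Finset.range n, uberServe (A' i) (A' (i+1)) (s' i) (t' i) := by
  intro n
  induction n with
  | zero => intro _; simp [h0, matchDist_self]
  | succ n ih =>
    intro h
    have hn : n < m := h
    have IH := ih (le_of_lt hn)
    rw [Finset.sum_range_succ, Finset.sum_range_succ]
    have t1 : matchDist (B' n) (B' (n+1)) ≤ matchDist (B' n) (A' n) +
        matchDist (A' n) (B' (n+1)) := matchDist_triangle _ _ _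
    have t2 := htri n hn
    linarith

end Aux

section Main
variable {M : Type*} [MetricSpace M] {k m : ℕ}

lemma sum_dist_le_uber (hk : 1 ≤ k) (src dst : Fin m → M) (A0 : Fin k → M) :
    ∑ i : Fin m, dist (src i) (dst i) ≤ uberOPT src dst A0 := by
  haveI : Nonempty (Fin k) := ⟨⟨0, hk⟩⟩
  refine le_csInf ⟨_, fun _ => A0, rfl, rfl⟩ ?_
  rintro c ⟨A, -, rfl⟩
  exact Finset.sum_le_sum fun i _ => dist_le_uberServe _ _ _ _

lemma kServer_bddBelow (src : Fin m → M) (A0 : Fin k → M) :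
    BddBelow {c | ∃ A : Fin (m + 1) → Fin k → M, A 0 = A0 ∧
      (∀ i : Fin m, ∃ j, src i = A i.succ j) ∧
      c = ∑ i : Fin m, matchDist (A i.castSucc) (A i.succ)} := by
  refine ⟨0, ?_⟩
  rintro c ⟨A, -, -, rfl⟩
  exact Finset.sum_nonneg fun i _ => matchDist_nonneg _ _

lemma kServer_le_uber (hk : 1 ≤ k) (src dst : Fin m → M) (A0 : Fin k → M) :
    kServerOPT src A0 ≤ uberOPT src dst A0 := by
  haveI : Nonempty (Fin k) := ⟨⟨0, hk⟩⟩
  refine le_csInf ⟨_, fun _ => A0, rfl, rfl⟩ ?_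
  rintro c ⟨A, hA0, rfl⟩
  choose σ jj hσ using fun i : Fin m =>
    uberServe_exists (A i.castSucc) (A i.succ) (src i) (dst i)
  set B : Fin (m+1) → Fin k → M :=
    Fin.cases A0 (fun i => Function.update (A i.castSucc) (jj i) (src i)) with hB
  -- ℕ-indexed versions
  set A' : ℕ → Fin k → M := fun n => if h : n < m + 1 then A ⟨n, h⟩ else A0 with hA'
  set B' : ℕ → Fin k → M := fun n => if h : n < m + 1 then B ⟨n, h⟩ else A0 with hB'
  set s' : ℕ → M := fun n => if h : n < m then src ⟨n, h⟩ else A0 ⟨0, hk⟩ with hs'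
  set t' : ℕ → M := fun n => if h : n < m then dst ⟨n, h⟩ else A0 ⟨0, hk⟩ with ht'
  have hAe : ∀ n (h : n < m), A' n = A (Fin.castSucc ⟨n, h⟩) := by
    intro n h
    simp only [hA']
    rw [dif_pos (by omega : n < m + 1)]
    exact congrArg A (Fin.ext rfl)
  have hAe1 : ∀ n (h : n < m), A' (n+1) = A (Fin.succ ⟨n, h⟩) := by
    intro n h
    simp only [hA']
    rw [dif_pos (by omega : n + 1 < m + 1)]
    exact congrArg A (Fin.ext rfl)
  have hBe1 : ∀ n (h : n < m),
      B' (n+1) = Function.update (A (Fin.castSucc ⟨n, h⟩)) (jj ⟨n, h⟩) (src ⟨n, h⟩) := by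
    intro n h
    simp only [hB']
    rw [dif_pos (by omega : n + 1 < m + 1)]
    have e : (⟨n+1, by omega⟩ : Fin (m+1)) = Fin.succ ⟨n, h⟩ := rfl
    rw [e, hB]
    exact Fin.cases_succ _
  have hse : ∀ n (h : n < m), s' n = src ⟨n, h⟩ := fun n h => by simp only [hs']; rw [dif_pos h]
  have hte : ∀ n (h : n < m), t' n = dst ⟨n, h⟩ := fun n h => by simp only [ht']; rw [dif_pos h]
  have h0 : B' 0 = A' 0 := by
    simp only [hB', hA']
    rw [dif_pos (by omega : 0 < m + 1), dif_pos (by omega : 0 < m + 1)]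
    have e : (⟨0, by omega⟩ : Fin (m+1)) = 0 := rfl
    rw [e, hA0]
    simp only [hB]
    exact Fin.cases_zero
  have htri : ∀ n < m, matchDist (A' n) (B' (n+1)) ≤
      uberServe (A' n) (A' (n+1)) (s' n) (t' n) - matchDist (B' (n+1)) (A' (n+1)) := by
    intro n h
    rw [hAe n h, hAe1 n h, hBe1 n h, hse n h, hte n h]
    have h1 := matchDist_update (A (Fin.castSucc ⟨n, h⟩)) (jj ⟨n, h⟩) (src ⟨n, h⟩)
    have h2 := update_cost (A (Fin.castSucc ⟨n, h⟩)) (A (Fin.succ ⟨n, h⟩))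
      (src ⟨n, h⟩) (dst ⟨n, h⟩) (σ ⟨n, h⟩) (jj ⟨n, h⟩) (hσ ⟨n, h⟩)
    linarith
  have key := key_lemma A' B' s' t' m h0 htri m le_rfl
  have hmd := matchDist_nonneg (B' m) (A' m)
  -- convert Fin sums to range sums
  have ec : ∑ i : Fin m, uberServe (A i.castSucc) (A i.succ) (src i) (dst i)
      = ∑ i ∈ Finset.range m, uberServe (A' i) (A' (i+1)) (s' i) (t' i) := by
    rw [← Fin.sum_univ_eq_sum_range (fun i => uberServe (A' i) (A' (i+1)) (s' i) (t' i)) m]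
    refine Finset.sum_congr rfl fun i _ => ?_
    have hi : (i : ℕ) < m := i.isLt
    rw [hAe i hi, hAe1 i hi, hse i hi, hte i hi]
  have eb : ∑ i : Fin m, matchDist (B i.castSucc) (B i.succ)
      = ∑ i ∈ Finset.range m, matchDist (B' i) (B' (i+1)) := by
    rw [← Fin.sum_univ_eq_sum_range (fun i => matchDist (B' i) (B' (i+1))) m]
    refine Finset.sum_congr rfl fun i _ => ?_
    have hi : (i : ℕ) < m := i.isLt
    have e1 : B' i = B i.castSucc := by
      simp only [hB']
      rw [dif_pos (by omega : (i:ℕ) < m + 1)]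
      exact congrArg B (Fin.ext rfl)
    have e2 : B' (i+1) = B i.succ := by
      simp only [hB']
      rw [dif_pos (by omega : (i:ℕ) + 1 < m + 1)]
      exact congrArg B (Fin.ext rfl)
    rw [e1, e2]
  rw [kServerOPT]
  refine csInf_le_of_le (kServer_bddBelow src A0)
    (show (∑ i : Fin m, matchDist (B i.castSucc) (B i.succ)) ∈ _ from ⟨B, ?_, ?_, rfl⟩) ?_
  · simp only [hB]; exact Fin.cases_zero
  · intro i
    refine ⟨jj i, ?_⟩
    simp only [hB]
    rw [Fin.cases_succ, Function.update_self]
  · rw [eb, ec]; linarith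

end Main

/-- for every `α ≥ 0`,
`α · OPT_k + 2 ∑ d(s_i, t_i) ≤ (α + 2) · OPT_U`; consequently any Uber solution
of cost `C ≤ α · OPT_k + 2 ∑ d(s_i, t_i)` satisfies `C ≤ (α + 2) · OPT_U`. -/
theorem approx_kServer_gives_approx_uber {M : Type*} [MetricSpace M] [Fintype M] {k m : ℕ}
    (hk : 1 ≤ k) (src dst : Fin m → M) (A0 : Fin k → M) (α : ℝ) (hα : 0 ≤ α) :
    α * kServerOPT src A0 + 2 * ∑ i : Fin m, dist (src i) (dst i) ≤
      (α + 2) * uberOPT src dst A0 ∧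
    ∀ C : ℝ, C ≤ α * kServerOPT src A0 + 2 * ∑ i : Fin m, dist (src i) (dst i) →
      C ≤ (α + 2) * uberOPT src dst A0 := by
  have h1 : kServerOPT src A0 ≤ uberOPT src dst A0 := kServer_le_uber hk src dst A0
  have h2 : ∑ i : Fin m, dist (src i) (dst i) ≤ uberOPT src dst A0 :=
    sum_dist_le_uber hk src dst A0
  have h3 : α * kServerOPT src A0 ≤ α * uberOPT src dst A0 :=
    mul_le_mul_of_nonneg_left h1 hα
  have main : α * kServerOPT src A0 + 2 * ∑ i : Fin m, dist (src i) (dst i) ≤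
      (α + 2) * uberOPT src dst A0 := by nlinarith
  exact ⟨main, fun C hC => hC.trans main⟩
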